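/- For any modal formula A, the following are equivalent: (1) A is a theorem of MNF; (2) A is valid in all transitive MN-frames; (3) A is valid in all finite transitive MN-frames. -/

import Mathlib

/-- Modal formulas: variables, ⊥, →, □. -/
inductive Fml : Type
  | var : ℕ → Fml
  | bot : Fml
  | imp : Fml → Fml → Fml
  | box : Fml → Fml
  deriving DecidableEq

namespace Fml

/-- ¬A is an abbreviation for A → ⊥. -/
def neg (A : Fml) : Fml := imp A bot

/-- ⊤ is an abbreviation for ¬⊥. -/
def top : Fml := neg bot

/-- A ∧ B is an abbreviation for ¬(A → ¬B). -/
def and (A B : Fml) : Fml := neg (imp A (neg B))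

/-- Uniform substitution. -/
def subst (σ : ℕ → Fml) : Fml → Fml
  | var n => σ n
  | bot => bot
  | imp A B => imp (subst σ A) (subst σ B)
  | box A => box (subst σ A)

end Fml

/-- A formula is a propositional tautology if it is true under every valuation
that respects ⊥ and →, treating variables and boxed formulas as atoms. -/
def IsTautology (A : Fml) : Prop :=
  ∀ val : Fml → Bool,
    (val Fml.bot = false) →
    (∀ B C : Fml, val (Fml.imp B C) = (!(val B) || val C)) →
    val A = true

/-- Provability in the extension of the logic MN by the axioms in `Ax`:
axioms are all propositional tautologies and the members of `Ax`; the rules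
are Modus Ponens, Necessitation, and RM. -/
inductive MNProv (Ax : Fml → Prop) : Fml → Prop
  | taut {A : Fml} : IsTautology A → MNProv Ax A
  | ax {A : Fml} : Ax A → MNProv Ax A
  | mp {A B : Fml} : MNProv Ax (A.imp B) → MNProv Ax A → MNProv Ax B
  | nec {A : Fml} : MNProv Ax A → MNProv Ax A.box
  | rm {A B : Fml} : MNProv Ax (A.imp B) → MNProv Ax (A.box.imp B.box)

/-- The axiom P : ¬□⊥. -/
def AxP : Fml → Prop := fun A => A = (Fml.box Fml.bot).neg

/-- The axiom scheme D : ¬(□B ∧ □¬B). -/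
def AxD : Fml → Prop := fun A => ∃ B : Fml, A = ((B.box).and (B.neg.box)).neg

/-- The axiom scheme 4 : □B → □□B. -/
def AxF : Fml → Prop := fun A => ∃ B : Fml, A = B.box.imp B.box.box

def MN : Fml → Prop := MNProv (fun _ => False)
def MNP : Fml → Prop := MNProv AxP
def MND : Fml → Prop := MNProv AxD
def MNF : Fml → Prop := MNProv AxF
def MNPF : Fml → Prop := MNProv (fun A => AxP A ∨ AxF A)
def MNDF : Fml → Prop := MNProv (fun A => AxD A ∨ AxF A)

/-- An MN-frame: a nonempty set `W` together with a relation between worlds and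
nonempty subsets of `W` satisfying monotonicity. -/
structure MNFrame (W : Type*) where
  nonempty : Nonempty W
  rel : W → Set W → Prop
  rel_nonempty : ∀ (x : W) (V : Set W), rel x V → V.Nonempty
  mono : ∀ (x : W) (V U : Set W), rel x V → V ⊆ U → rel x U

/-- `Sat` is a satisfaction relation on the MN-frame `F`. -/
structure IsSat {W : Type*} (F : MNFrame W) (Sat : W → Fml → Prop) : Prop where
  bot : ∀ x : W, ¬ Sat x Fml.bot
  imp : ∀ (x : W) (A B : Fml), Sat x (A.imp B) ↔ (Sat x A → Sat x B)
  box : ∀ (x : W) (A : Fml), Sat x A.box ↔ ∀ V : Set W, F.rel x V → ∃ y ∈ V, Sat y A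

/-- A formula is valid in an MN-frame if it is satisfied at every world under
every satisfaction relation on the frame. -/
def Valid {W : Type*} (F : MNFrame W) (A : Fml) : Prop :=
  ∀ Sat : W → Fml → Prop, IsSat F Sat → ∀ x : W, Sat x A

/-- Transitivity of an MN-frame. -/
def MNFrame.IsTransitive {W : Type*} (F : MNFrame W) : Prop :=
  ∀ (x : W) (V : Set W) (U : W → Set W),
    F.rel x V → (∀ y ∈ V, F.rel y (U y)) → F.rel x (⋃ y ∈ V, U y)

/-- MNP-frames: every world is related to some subset. -/
def MNFrame.IsMNP {W : Type*} (F : MNFrame W) : Prop :=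
  ∀ x : W, ∃ V : Set W, F.rel x V

/-- MND-frames: every world is related to `V` or to its complement. -/
def MNFrame.IsMND {W : Type*} (F : MNFrame W) : Prop :=
  ∀ (x : W) (V : Set W), F.rel x V ∨ F.rel x Vᶜ


/-!
Soundness: the rules preserve validity in every MN-frame (necessitation because related sets are
nonempty), and `□B → □□B` holds in transitive frames: if `□B` failed at every `y` of some `V` with
`x ≺ V`, choosing `y ≺ U y` with `B` false on `U y` gives `x ≺ ⋃ U y`, which refutes `□B` at `x`.

Completeness and the finite model property come from one finite canonical model. For a finite set
`S` of formulas, an atom is a subset `x ⊆ S` whose conjunction of signed members `±B` is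
consistent; every valuation satisfies one such conjunction, so a formula holding in all atoms is a
theorem. Relate `x` to `{z | C ∉ z}` whenever `□C ∈ S \ x`, and close under monotonicity and
transitivity. With `S` the subformulas of `A` this is a finite transitive frame in which every
subformula holds exactly at the atoms containing it. The only nontrivial case is that `□B ∈ x` and
`x ≺ V` yield an atom of `V` containing `B`; by induction on `≺` one proves it together with the
existence of an atom of `V` containing `□B`, and for the generating sets the latter is where
`□B → □□B` and RM enter.
-/

namespace Fml

def subformulas : Fml → Finset Fml
  | var n => {var n}
  | bot => {bot}
  | imp B C => insert (imp B C) (B.subformulas ∪ C.subformulas)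
  | box B => insert (box B) B.subformulas

theorem mem_subformulas_self (B : Fml) : B ∈ B.subformulas := by
  cases B <;> simp [subformulas]

def conjLits (x : Finset Fml) : List Fml → Fml
  | [] => top
  | B :: l => (if B ∈ x then B else B.neg).and (conjLits x l)

theorem conjLits_congr {x y : Finset Fml} :
    ∀ {l : List Fml}, (∀ B ∈ l, B ∈ x ↔ B ∈ y) → conjLits x l = conjLits y l
  | [], _ => rfl
  | B :: l, h => by
    simp only [conjLits, h B List.mem_cons_self,
      conjLits_congr fun C hC => h C (List.mem_cons_of_mem B hC)]

end Fml

open Fml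

structure IsValuation (v : Fml → Bool) : Prop where
  bot : v .bot = false
  imp : ∀ B C, v (.imp B C) = (!v B || v C)

namespace IsValuation

variable {v : Fml → Bool}

theorem neg (hv : IsValuation v) (B : Fml) : v B.neg = !v B := by
  rw [Fml.neg, hv.imp, hv.bot, Bool.or_false]

theorem top (hv : IsValuation v) : v Fml.top = true := by
  rw [Fml.top, hv.neg, hv.bot, Bool.not_false]

theorem and (hv : IsValuation v) (B C : Fml) : v (B.and C) = (v B && v C) := by
  rw [Fml.and, hv.neg, hv.imp, hv.neg]
  cases v B <;> cases v C <;> rfl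

theorem conjLits_eq_true (hv : IsValuation v) (x : Finset Fml) (l : List Fml) :
    v (conjLits x l) = true ↔ ∀ B ∈ l, v B = decide (B ∈ x) := by
  induction l with
  | nil => simp [conjLits, hv.top]
  | cons B l ih =>
    by_cases hB : B ∈ x <;> simp [conjLits, hv.and, hv.neg, ih, hB]

end IsValuation

theorem isTautology_iff {A : Fml} : IsTautology A ↔ ∀ v, IsValuation v → v A = true :=
  ⟨fun h v hv => h v hv.bot hv.imp, fun h v hbot himp => h v ⟨hbot, himp⟩⟩

namespace MNProv

variable {Ax : Fml → Prop}

theorem of_forall_isValuation {Γ : List Fml} {F : Fml} (hΓ : ∀ E ∈ Γ, MNProv Ax E)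
    (h : ∀ v, IsValuation v → (∀ E ∈ Γ, v E = true) → v F = true) : MNProv Ax F := by
  induction Γ generalizing F with
  | nil => exact taut (isTautology_iff.2 fun v hv => h v hv (by simp))
  | cons E Γ ih =>
    refine mp (ih (fun E' hE' => hΓ E' (List.mem_cons_of_mem E hE')) fun v hv hΓv => ?_)
      (hΓ E List.mem_cons_self)
    rw [hv.imp]
    cases hE : v E
    · rfl
    · simp [h v hv (List.forall_mem_cons.2 ⟨hE, hΓv⟩)]

theorem imp_trans {B C D : Fml} (hBC : MNProv Ax (B.imp C)) (hCD : MNProv Ax (C.imp D)) :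
    MNProv Ax (B.imp D) :=
  of_forall_isValuation (Γ := [B.imp C, C.imp D]) (by simp [hBC, hCD]) fun v hv h => by
    simp only [List.mem_cons, List.not_mem_nil, forall_eq_or_imp, hv.imp] at h ⊢
    cases hB : v B <;> cases hC : v C <;> simp_all

/-- Every valuation satisfies `conjLits x l` for some `x`. -/
theorem of_forall_conjLits_imp {E : Fml} {l : List Fml} (hl : l.Nodup)
    (h : ∀ x, MNProv Ax ((conjLits x l).imp E)) : MNProv Ax E := by
  induction l with
  | nil =>
    refine of_forall_isValuation (Γ := [_]) (by simpa using h ∅) fun v hv hΓ => ?_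
    simpa [hv.imp, conjLits, hv.top] using hΓ
  | cons B l ih =>
    obtain ⟨hBl, hl⟩ := List.nodup_cons.1 hl
    refine ih hl fun x => of_forall_isValuation (Γ := [_, _])
      (by simpa using ⟨h (insert B x), h (x.erase B)⟩) fun v hv hΓ => ?_
    have hne : ∀ C ∈ l, C ≠ B := fun C hC hCB => hBl (hCB ▸ hC)
    have hins : conjLits (insert B x) l = conjLits x l :=
      conjLits_congr fun C hC => by simp [hne C hC]
    have hera : conjLits (x.erase B) l = conjLits x l :=
      conjLits_congr fun C hC => by simp [hne C hC]
    simp only [List.mem_cons, List.not_mem_nil, forall_eq_or_imp, conjLits, hins, hera,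
      Finset.mem_insert_self, Finset.notMem_erase, if_true, if_false, hv.imp, hv.and,
      hv.neg] at hΓ ⊢
    cases hB : v B <;> cases hx : v (conjLits x l) <;> simp_all

end MNProv

structure Atom (Ax : Fml → Prop) (S : Finset Fml) where
  carrier : Finset Fml
  subset : carrier ⊆ S
  consistent : ¬ MNProv Ax (conjLits carrier S.toList).neg

namespace Atom

variable {Ax : Fml → Prop} {S : Finset Fml}

instance : Finite (Atom Ax S) :=
  Finite.of_injective
    (fun x : Atom Ax S => (⟨x.carrier, Finset.mem_powerset.2 x.subset⟩ : S.powerset))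
    fun x y h => by cases x; cases y; simpa using h

theorem exists_isValuation (x : Atom Ax S) {Γ : List Fml} (hΓ : ∀ E ∈ Γ, MNProv Ax E) :
    ∃ v, IsValuation v ∧ (∀ E ∈ Γ, v E = true) ∧ ∀ B ∈ S, v B = decide (B ∈ x.carrier) := by
  by_contra! h
  refine x.consistent (MNProv.of_forall_isValuation hΓ fun v hv hΓv => ?_)
  obtain ⟨B, hB, hvB⟩ := h v hv hΓv
  rw [hv.neg, Bool.not_eq_true', Bool.eq_false_iff, ne_eq, hv.conjLits_eq_true]
  exact fun hall => hvB (hall B (Finset.mem_toList.2 hB))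

theorem mem_of_imp (x : Atom Ax S) {E E' : Fml} (h : MNProv Ax (E.imp E')) (hE : E ∈ x.carrier)
    (hE' : E' ∈ S) : E' ∈ x.carrier := by
  obtain ⟨v, hv, hΓ, hx⟩ := x.exists_isValuation (Γ := [_]) (by simpa using h)
  have := hx E (x.subset hE)
  simp_all [hv.imp]

theorem mem_of_prov (x : Atom Ax S) {E : Fml} (h : MNProv Ax E) (hE : E ∈ S) : E ∈ x.carrier := by
  obtain ⟨v, hv, hΓ, hx⟩ := x.exists_isValuation (Γ := [_]) (by simpa using h)
  simpa [hx E hE] using hΓ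

theorem bot_notMem (x : Atom Ax S) : Fml.bot ∉ x.carrier := fun h => by
  obtain ⟨v, hv, -, hx⟩ := x.exists_isValuation (Γ := []) (by simp)
  simpa [hv.bot, h] using hx _ (x.subset h)

theorem imp_mem_iff (x : Atom Ax S) {B C : Fml} (hBC : B.imp C ∈ S) (hB : B ∈ S) (hC : C ∈ S) :
    B.imp C ∈ x.carrier ↔ (B ∈ x.carrier → C ∈ x.carrier) := by
  obtain ⟨v, hv, -, hx⟩ := x.exists_isValuation (Γ := []) (by simp)
  have := hx _ hBC
  rw [hv.imp, hx B hB, hx C hC] at this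
  by_cases hBx : B ∈ x.carrier <;> by_cases hCx : C ∈ x.carrier <;> simp_all

theorem _root_.MNProv.of_forall_atom {E : Fml}
    (h : ∀ x : Atom Ax S, ∀ v, IsValuation v → (∀ B ∈ S, v B = decide (B ∈ x.carrier)) →
      v E = true) : MNProv Ax E := by
  refine MNProv.of_forall_conjLits_imp S.nodup_toList fun y => ?_
  rw [conjLits_congr (y := y ∩ S) fun B hB => by simp [Finset.mem_toList.1 hB]]
  by_cases hy : MNProv Ax (conjLits (y ∩ S) S.toList).neg
  · refine MNProv.of_forall_isValuation (Γ := [_]) (by simpa using hy) fun v hv hΓ => ?_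
    simp_all [hv.imp, hv.neg]
  · refine MNProv.of_forall_isValuation (Γ := []) (by simp) fun v hv _ => ?_
    rw [hv.imp]
    by_cases hyv : v (conjLits (y ∩ S) S.toList) = true
    · have hagree := (hv.conjLits_eq_true _ _).1 hyv
      rw [h ⟨y ∩ S, Finset.inter_subset_right, hy⟩ v hv fun B hB =>
        hagree B (Finset.mem_toList.2 hB), Bool.or_true]
    · simp [hyv]

theorem exists_notMem {C : Fml} (h : ¬ MNProv Ax C) : ∃ x : Atom Ax S, C ∉ x.carrier := by
  by_contra! hC
  refine h (MNProv.of_forall_atom (S := S) fun x v _ hx => ?_)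
  simpa [hC x] using hx C (x.subset (hC x))

theorem exists_mem_notMem {B C : Fml} (hB : B ∈ S) (h : ¬ MNProv Ax (B.imp C)) :
    ∃ x : Atom Ax S, B ∈ x.carrier ∧ C ∉ x.carrier := by
  by_contra! hBC
  refine h (MNProv.of_forall_atom (S := S) fun x v hv hx => ?_)
  rw [hv.imp, hx B hB]
  by_cases hBx : B ∈ x.carrier
  · simp [hx C (x.subset (hBC x hBx)), hBC x hBx]
  · simp [hBx]

end Atom

namespace MNFrame

variable {W : Type*}

def sat (F : MNFrame W) (val : W → ℕ → Prop) : W → Fml → Prop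
  | x, .var n => val x n
  | _, .bot => False
  | x, .imp B C => sat F val x B → sat F val x C
  | x, .box B => ∀ V, F.rel x V → ∃ y ∈ V, sat F val y B

variable (F : MNFrame W)

theorem isSat_sat (val : W → ℕ → Prop) : IsSat F (F.sat val) :=
  ⟨fun _ h => h, fun _ _ _ => Iff.rfl, fun _ _ => Iff.rfl⟩

theorem valid_box_imp_box_box (hF : F.IsTransitive) (B : Fml) :
    Valid F (B.box.imp B.box.box) := by
  intro Sat hSat x
  rw [hSat.imp, hSat.box, hSat.box]
  intro hB V hV
  by_contra! hV'
  simp only [hSat.box, not_forall, not_exists, not_and] at hV'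
  choose! U hU hUB using hV'
  obtain ⟨u, hu, huB⟩ := hB _ (hF x V U hV hU)
  obtain ⟨y, hy, huy⟩ := Set.mem_iUnion₂.1 hu
  exact hUB y hy u huy huB

end MNFrame

open Classical in
theorem IsSat.isValuation {W : Type*} {F : MNFrame W} {Sat : W → Fml → Prop} (hSat : IsSat F Sat)
    (x : W) : IsValuation fun B => decide (Sat x B) :=
  ⟨by simp [hSat.bot x], fun B C => by by_cases hB : Sat x B <;> simp [hSat.imp, hB]⟩

theorem MNProv.valid {Ax : Fml → Prop} {W : Type*} {F : MNFrame W} (hAx : ∀ B, Ax B → Valid F B)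
    {A : Fml} (h : MNProv Ax A) : Valid F A := by
  induction h with
  | taut h => exact fun Sat hSat x => by simpa using isTautology_iff.1 h _ (hSat.isValuation x)
  | ax h => exact hAx _ h
  | mp _ _ ihAB ihA =>
    exact fun Sat hSat x => (hSat.imp x _ _).1 (ihAB Sat hSat x) (ihA Sat hSat x)
  | nec _ ih =>
    refine fun Sat hSat x => (hSat.box x _).2 fun V hV => ?_
    obtain ⟨y, hy⟩ := F.rel_nonempty x V hV
    exact ⟨y, hy, ih Sat hSat y⟩
  | rm _ ih =>
    refine fun Sat hSat x => (hSat.imp x _ _).2 fun hB => (hSat.box x _).2 fun V hV => ?_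
    obtain ⟨y, hy, hyA⟩ := (hSat.box x _).1 hB V hV
    exact ⟨y, hy, (hSat.imp y _ _).1 (ih Sat hSat y) hyA⟩

inductive CanonicalRel (Ax : Fml → Prop) (S : Finset Fml) : Atom Ax S → Set (Atom Ax S) → Prop
  | box_notMem (x : Atom Ax S) {C : Fml} (hC : C.box ∈ S) (hCx : C.box ∉ x.carrier) :
      CanonicalRel Ax S x {z | C ∉ z.carrier}
  | mono {x : Atom Ax S} {V V' : Set (Atom Ax S)} : CanonicalRel Ax S x V → V ⊆ V' →
      CanonicalRel Ax S x V'
  | trans {x : Atom Ax S} {V : Set (Atom Ax S)} (U : Atom Ax S → Set (Atom Ax S)) :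
      CanonicalRel Ax S x V → (∀ y ∈ V, CanonicalRel Ax S y (U y)) →
      CanonicalRel Ax S x (⋃ y ∈ V, U y)

namespace CanonicalRel

variable {Ax : Fml → Prop} {S : Finset Fml}

theorem nonempty {x : Atom Ax S} {V : Set (Atom Ax S)} (h : CanonicalRel Ax S x V) :
    V.Nonempty := by
  induction h with
  | box_notMem x hC hCx => exact Atom.exists_notMem fun hprov => hCx (x.mem_of_prov hprov.nec hC)
  | mono _ hVV' ih => exact ih.mono hVV'
  | trans U _ _ ih ihU =>
    obtain ⟨y, hy⟩ := ih
    obtain ⟨u, hu⟩ := ihU y hy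
    exact ⟨u, Set.mem_biUnion hy hu⟩

/-- The second conjunct is the invariant that carries the first through `trans`; axiom 4 is
what establishes it for the generating sets. -/
theorem exists_mem_of_box_mem (h4 : ∀ B : Fml, Ax (B.box.imp B.box.box)) {B : Fml} (hB : B ∈ S)
    (hBbox : B.box ∈ S) {x : Atom Ax S} {V : Set (Atom Ax S)} (h : CanonicalRel Ax S x V)
    (hx : B.box ∈ x.carrier) : (∃ w ∈ V, B ∈ w.carrier) ∧ ∃ w ∈ V, B.box ∈ w.carrier := by
  induction h with
  | box_notMem x hC hCx =>
    have hBC : ¬ MNProv Ax (B.imp _) := fun hprov => hCx (x.mem_of_imp hprov.rm hx hC)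
    have hBboxC : ¬ MNProv Ax (B.box.imp _) := fun hprov =>
      hCx (x.mem_of_imp ((MNProv.ax (h4 B)).imp_trans hprov.rm) hx hC)
    exact ⟨Atom.exists_mem_notMem hB hBC |>.imp fun _ h => h.symm,
      Atom.exists_mem_notMem hBbox hBboxC |>.imp fun _ h => h.symm⟩
  | mono _ hVV' ih =>
    obtain ⟨⟨w, hw, hwB⟩, ⟨w', hw', hw'B⟩⟩ := ih hx
    exact ⟨⟨w, hVV' hw, hwB⟩, ⟨w', hVV' hw', hw'B⟩⟩
  | trans U _ _ ih ihU =>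
    obtain ⟨-, ⟨y, hy, hyB⟩⟩ := ih hx
    obtain ⟨⟨w, hw, hwB⟩, ⟨w', hw', hw'B⟩⟩ := ihU y hy hyB
    exact ⟨⟨w, Set.mem_biUnion hy hw, hwB⟩, ⟨w', Set.mem_biUnion hy hw', hw'B⟩⟩

end CanonicalRel

def canonicalFrame (Ax : Fml → Prop) (S : Finset Fml) [Nonempty (Atom Ax S)] :
    MNFrame (Atom Ax S) where
  nonempty := ‹_›
  rel := CanonicalRel Ax S
  rel_nonempty _ _ := CanonicalRel.nonempty
  mono _ _ _ := CanonicalRel.mono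

theorem canonicalFrame_isTransitive (Ax : Fml → Prop) (S : Finset Fml) [Nonempty (Atom Ax S)] :
    (canonicalFrame Ax S).IsTransitive :=
  fun _ _ U hV hU => CanonicalRel.trans U hV hU

theorem canonicalFrame_sat_iff {Ax : Fml → Prop} {S : Finset Fml} [Nonempty (Atom Ax S)]
    (h4 : ∀ B : Fml, Ax (B.box.imp B.box.box)) {B : Fml} (hB : B.subformulas ⊆ S)
    (x : Atom Ax S) :
    (canonicalFrame Ax S).sat (fun z n => Fml.var n ∈ z.carrier) x B ↔ B ∈ x.carrier := by
  induction B generalizing x with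
  | var n => rfl
  | bot => exact iff_of_false id x.bot_notMem
  | imp B C ihB ihC =>
    simp only [subformulas, Finset.insert_subset_iff, Finset.union_subset_iff] at hB
    rw [x.imp_mem_iff hB.1 (hB.2.1 B.mem_subformulas_self) (hB.2.2 C.mem_subformulas_self),
      ← ihB hB.2.1, ← ihC hB.2.2]
    rfl
  | box B ih =>
    simp only [subformulas, Finset.insert_subset_iff] at hB
    simp only [MNFrame.sat]
    constructor
    · intro hsat
      by_contra hx
      obtain ⟨y, hyB, hy⟩ := hsat _ (.box_notMem x hB.1 hx)
      exact hyB ((ih hB.2 y).1 hy)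
    · intro hx V hV
      obtain ⟨w, hw, hwB⟩ := (CanonicalRel.exists_mem_of_box_mem h4
        (hB.2 B.mem_subformulas_self) hB.1 hV hx).1
      exact ⟨w, hw, (ih hB.2 w).2 hwB⟩

theorem exists_finite_transitive_not_valid {Ax : Fml → Prop}
    (h4 : ∀ B : Fml, Ax (B.box.imp B.box.box)) {A : Fml} (hA : ¬ MNProv Ax A) :
    ∃ (W : Type) (F : MNFrame W), Finite W ∧ F.IsTransitive ∧ ¬ Valid F A := by
  obtain ⟨x, hx⟩ := Atom.exists_notMem (S := A.subformulas) hA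
  have : Nonempty (Atom Ax A.subformulas) := ⟨x⟩
  refine ⟨_, canonicalFrame Ax A.subformulas, inferInstance,
    canonicalFrame_isTransitive Ax A.subformulas, fun hvalid => hx ?_⟩
  exact (canonicalFrame_sat_iff h4 subset_rfl x).1 (hvalid _ (MNFrame.isSat_sat _ _) x)

/-- A formula is a theorem of MNF iff it is valid in all transitive
MN-frames iff it is valid in all finite transitive MN-frames. -/
theorem stmt6 (A : Fml) :
    (MNF A ↔ ∀ (W : Type) (F : MNFrame W), F.IsTransitive → Valid F A) ∧
    (MNF A ↔ ∀ (W : Type) (F : MNFrame W), Finite W → F.IsTransitive → Valid F A) := by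
  have h4 : ∀ B : Fml, AxF (B.box.imp B.box.box) := fun B => ⟨B, rfl⟩
  have sound : MNF A → ∀ (W : Type) (F : MNFrame W), F.IsTransitive → Valid F A :=
    fun hA _ F hF => MNProv.valid (by rintro _ ⟨B, rfl⟩; exact F.valid_box_imp_box_box hF B) hA
  have complete : (∀ (W : Type) (F : MNFrame W), Finite W → F.IsTransitive → Valid F A) →
      MNF A := by
    intro hvalid
    by_contra hA
    obtain ⟨W, F, hfin, hF, hnot⟩ := exists_finite_transitive_not_valid h4 hA
    exact hnot (hvalid W F hfin hF)
  exact ⟨⟨sound, fun h => complete fun W F _ => h W F⟩,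
    ⟨fun hA W F _ => sound hA W F, complete⟩⟩
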